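/- arXiv:1707.07239 — 3 statements merged into one kernel-verified Lean document; each statement's English description precedes it below -/
import Mathlib

section
/- Correctness of TOPP-RA (infeasibility direction): if there exists an admissible parameterization x_0, u_0, …, u_{N-1}, x_N with x_0 = a, x_N = b, x_{i+1} = x_i + 2Δ_i u_i and (u_i, x_i) ∈ Ω_i for all i, and x_N ∈ K_N, then for every i ≤ N, x_i ∈ K_i; in particular K_0 is nonempty and contains a. -/
/-- Admissible states at stage `i`. -/
def Xset (Ω : ℕ → Set (ℝ × ℝ)) (i : ℕ) : Set ℝ := {x | ∃ u : ℝ, (u, x) ∈ Ω i}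

/-- The one-step set of a set of states `I` at stage `i`. -/
def Qset (Ω : ℕ → Set (ℝ × ℝ)) (Δ : ℕ → ℝ) (i : ℕ) (I : Set ℝ) : Set ℝ :=
  {x | x ∈ Xset Ω i ∧ ∃ u : ℝ, (u, x) ∈ Ω i ∧ x + 2 * Δ i * u ∈ I}

theorem mem_Qset_of_step {Ω : ℕ → Set (ℝ × ℝ)} {Δ : ℕ → ℝ} {i : ℕ} {I : Set ℝ} {x u : ℝ}
    (hΩ : (u, x) ∈ Ω i) (hstep : x + 2 * Δ i * u ∈ I) : x ∈ Qset Ω Δ i I :=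
  ⟨⟨u, hΩ⟩, u, hΩ, hstep⟩

theorem mem_of_admissible {Ω : ℕ → Set (ℝ × ℝ)} {Δ : ℕ → ℝ} {N : ℕ} {K : ℕ → Set ℝ}
    (hKrec : ∀ i < N, K i = Qset Ω Δ i (K (i + 1))) {x u : ℕ → ℝ}
    (hadm : ∀ i < N, (u i, x i) ∈ Ω i ∧ x (i + 1) = x i + 2 * Δ i * u i)
    (hend : x N ∈ K N) {i : ℕ} (hi : i ≤ N) : x i ∈ K i := by
  induction hi using Nat.decreasingInduction with
  | self => exact hend
  | of_succ k hk hnext =>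
    obtain ⟨hΩ, hdyn⟩ := hadm k hk
    rw [hKrec k hk]
    exact mem_Qset_of_step hΩ (hdyn ▸ hnext)

theorem toppra_infeasibility_general (Ω : ℕ → Set (ℝ × ℝ)) (Δ : ℕ → ℝ) (N : ℕ) (a : ℝ)
    (K : ℕ → Set ℝ)
    (hKrec : ∀ i < N, K i = Qset Ω Δ i (K (i + 1)))
    (x u : ℕ → ℝ) (hx0 : x 0 = a)
    (hadm : ∀ i < N, (u i, x i) ∈ Ω i ∧ x (i + 1) = x i + 2 * Δ i * u i)
    (hend : x N ∈ K N) :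
    (∀ i ≤ N, x i ∈ K i) ∧ (K 0).Nonempty ∧ a ∈ K 0 := by
  have hall : ∀ i ≤ N, x i ∈ K i := fun i hi => mem_of_admissible hKrec hadm hend hi
  have ha : a ∈ K 0 := hx0 ▸ hall 0 N.zero_le
  exact ⟨hall, ⟨a, ha⟩, ha⟩

/-- Correctness of TOPP-RA (infeasibility direction): an admissible parameterization
from `a` to `b` has each of its states in the corresponding controllable set; in
particular `K 0` is nonempty and contains `a`. -/
theorem toppra_infeasibility (Ω : ℕ → Set (ℝ × ℝ)) (Δ : ℕ → ℝ) (N : ℕ) (a b : ℝ)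
    (K : ℕ → Set ℝ) (hKN : K N = {b} ∩ Xset Ω N)
    (hKrec : ∀ i < N, K i = Qset Ω Δ i (K (i + 1)))
    (x u : ℕ → ℝ) (hx0 : x 0 = a) (hxN : x N = b)
    (hadm : ∀ i < N, (u i, x i) ∈ Ω i ∧ x (i + 1) = x i + 2 * Δ i * u i)
    (hend : x N ∈ K N) :
    (∀ i ≤ N, x i ∈ K i) ∧ (K 0).Nonempty ∧ a ∈ K 0 :=
  toppra_infeasibility_general Ω Δ N a K hKrec x u hx0 hadm hend
end

section
/- Greedy optimality lemma: suppose for every stage i the maximal transition function T_i^β(x) = x + 2Δ β_i(x), where β_i(x) is the maximal admissible control at x, is non-decreasing on K_i. Define the greedy sequence by x*_0 = a and x*_{i+1} = min(T_i^β(x*_i), max K_{i+1}). Then for any admissible parameterization (x_i) with x_0 = a and x_N ∈ K_N, one has x*_i ≥ x_i for all i; consequently the greedy parameterization has minimal cost Σ_i Δ/√(x_i) among admissible parameterizations. -/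
/-! Since `β_i(x)` is an admissible control, the maximal transition `T_i^β(x)` lies in
`K_{i+1}`, so the clipping at `max K_{i+1}` never acts and the greedy sequence is simply the
orbit of `a` under the maps `T_i^β`. Every admissible step satisfies `x_{i+1} ≤ T_i^β(x_i)`
because `β_i(x_i)` is the largest admissible control, and monotonicity of `T_i^β` propagates
`x_i ≤ x*_i` from `i` to `i + 1`. The cost bound then holds termwise, `Δ / √x` being
antitone. -/

open Finset

theorem le_of_le_step_of_monotoneOn {α : Type*} [Preorder α] {N : ℕ} {K : ℕ → Set α}
    {f : ℕ → α → α} {y z : ℕ → α} (hf : ∀ i < N, MonotoneOn (f i) (K i))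
    (hyK : ∀ i ≤ N, y i ∈ K i) (hzK : ∀ i ≤ N, z i ∈ K i)
    (hy : ∀ i < N, y (i + 1) ≤ f i (y i)) (hz : ∀ i < N, z (i + 1) = f i (z i))
    (h0 : y 0 ≤ z 0) : ∀ i ≤ N, y i ≤ z i := by
  intro i hi
  induction i with
  | zero => exact h0
  | succ i ih =>
    have hiN : i < N := hi
    calc y (i + 1) ≤ f i (y i) := hy i hiN
      _ ≤ f i (z i) := hf i hiN (hyK i hiN.le) (hzK i hiN.le) (ih hiN.le)
      _ = z (i + 1) := (hz i hiN).symm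

theorem sum_div_sqrt_le_of_le {ι : Type*} {s : Finset ι} {c : ℝ} {x y : ι → ℝ} (hc : 0 ≤ c)
    (hx : ∀ i ∈ s, 0 < x i) (hxy : ∀ i ∈ s, x i ≤ y i) :
    ∑ i ∈ s, c / √(y i) ≤ ∑ i ∈ s, c / √(x i) :=
  sum_le_sum fun i hi =>
    div_le_div_of_nonneg_left hc (Real.sqrt_pos.2 (hx i hi)) (Real.sqrt_le_sqrt (hxy i hi))

section Greedy

variable {N : ℕ} {Δ : ℝ} {Ω : ℕ → Set (ℝ × ℝ)} {K : ℕ → Set ℝ} {β : ℕ → ℝ → ℝ} {i : ℕ}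

def admissibleControls (Δ : ℝ) (Ω : ℕ → Set (ℝ × ℝ)) (K : ℕ → Set ℝ) (i : ℕ) (x : ℝ) :
    Set ℝ :=
  {u | (u, x) ∈ Ω i ∧ x + 2 * Δ * u ∈ K (i + 1)}

def maxTransition (Δ : ℝ) (β : ℕ → ℝ → ℝ) (i : ℕ) (x : ℝ) : ℝ :=
  x + 2 * Δ * β i x

theorem maxTransition_mem {x : ℝ} (hβ : IsGreatest (admissibleControls Δ Ω K i x) (β i x)) :
    maxTransition Δ β i x ∈ K (i + 1) :=
  hβ.1.2

theorem add_le_maxTransition {x u : ℝ} (hΔ : 0 ≤ Δ)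
    (hβ : IsGreatest (admissibleControls Δ Ω K i x) (β i x))
    (hu : u ∈ admissibleControls Δ Ω K i x) : x + 2 * Δ * u ≤ maxTransition Δ β i x := by
  unfold maxTransition
  gcongr
  exact hβ.2 hu

theorem min_maxTransition_csSup {x : ℝ} (hK : BddAbove (K (i + 1)))
    (hβ : IsGreatest (admissibleControls Δ Ω K i x) (β i x)) :
    min (maxTransition Δ β i x) (sSup (K (i + 1))) = maxTransition Δ β i x :=
  min_eq_left (le_csSup hK (maxTransition_mem hβ))

theorem greedy_mem {xstar : ℕ → ℝ} (hK : ∀ i, BddAbove (K i))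
    (hβ : ∀ i < N, ∀ x ∈ K i, IsGreatest (admissibleControls Δ Ω K i x) (β i x))
    (hstep : ∀ i < N,
      xstar (i + 1) = min (maxTransition Δ β i (xstar i)) (sSup (K (i + 1))))
    (h0 : xstar 0 ∈ K 0) : ∀ i ≤ N, xstar i ∈ K i := by
  intro i hi
  induction i with
  | zero => exact h0
  | succ i ih =>
    have hβi := hβ i hi _ (ih (Nat.le_of_succ_le hi))
    rw [hstep i hi, min_maxTransition_csSup (hK _) hβi]
    exact maxTransition_mem hβi

end Greedy

theorem greedy_optimality_general (N : ℕ) (Δ : ℝ) (hΔ : 0 < Δ) (Ω : ℕ → Set (ℝ × ℝ))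
    (K : ℕ → Set ℝ) (β : ℕ → ℝ → ℝ) (a : ℝ)
    (hKbdd : ∀ i, Bornology.IsBounded (K i))
    (hβ : ∀ i < N, ∀ x ∈ K i,
      IsGreatest {u : ℝ | (u, x) ∈ Ω i ∧ x + 2 * Δ * u ∈ K (i + 1)} (β i x))
    (hmono : ∀ i < N, ∀ x ∈ K i, ∀ x' ∈ K i, x ≤ x' →
      x + 2 * Δ * β i x ≤ x' + 2 * Δ * β i x')
    (xstar : ℕ → ℝ) (hxstar0 : xstar 0 = a)
    (hxstarstep : ∀ i < N,
      xstar (i + 1) = min (xstar i + 2 * Δ * β i (xstar i)) (sSup (K (i + 1))))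
    (x u : ℕ → ℝ) (hx0 : x 0 = a) (hxK : ∀ i ≤ N, x i ∈ K i)
    (hadm : ∀ i < N, (u i, x i) ∈ Ω i ∧ x (i + 1) = x i + 2 * Δ * u i) :
    (∀ i ≤ N, x i ≤ xstar i) ∧
    ((∀ i ≤ N, 0 < x i) →
      ∑ i ∈ Finset.range (N + 1), Δ / Real.sqrt (xstar i) ≤
        ∑ i ∈ Finset.range (N + 1), Δ / Real.sqrt (x i)) := by
  have hxstarK : ∀ i ≤ N, xstar i ∈ K i :=
    greedy_mem (fun i => (hKbdd i).bddAbove) hβ hxstarstep (hxstar0 ▸ hx0 ▸ hxK 0 N.zero_le)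
  have hx_step : ∀ i < N, x (i + 1) ≤ maxTransition Δ β i (x i) := fun i hi => by
    obtain ⟨hΩ, hnext⟩ := hadm i hi
    have hu : u i ∈ admissibleControls Δ Ω K i (x i) := ⟨hΩ, hnext ▸ hxK (i + 1) hi⟩
    exact hnext ▸ add_le_maxTransition hΔ.le (hβ i hi _ (hxK i hi.le)) hu
  have hxstar_step : ∀ i < N, xstar (i + 1) = maxTransition Δ β i (xstar i) := fun i hi =>
    (hxstarstep i hi).trans
      (min_maxTransition_csSup (hKbdd _).bddAbove (hβ i hi _ (hxstarK i hi.le)))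
  have hdom : ∀ i ≤ N, x i ≤ xstar i :=
    le_of_le_step_of_monotoneOn (fun i hi _ hy _ hz hyz => hmono i hi _ hy _ hz hyz) hxK hxstarK
      hx_step hxstar_step (hx0.trans hxstar0.symm).le
  have hrange : ∀ i ∈ range (N + 1), i ≤ N := fun i hi => Nat.lt_succ_iff.mp (mem_range.mp hi)
  exact ⟨hdom, fun hpos => sum_div_sqrt_le_of_le hΔ.le (fun i hi => hpos i (hrange i hi))
    (fun i hi => hdom i (hrange i hi))⟩

/-- Greedy optimality lemma: if every maximal transition function is non-decreasing
on the controllable sets, the greedy sequence dominates every admissible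
parameterization pointwise, hence has minimal cost. -/
theorem greedy_optimality (N : ℕ) (Δ : ℝ) (hΔ : 0 < Δ) (Ω : ℕ → Set (ℝ × ℝ))
    (K : ℕ → Set ℝ) (β : ℕ → ℝ → ℝ) (a : ℝ)
    (hKne : ∀ i, (K i).Nonempty) (hKcl : ∀ i, IsClosed (K i))
    (hKbdd : ∀ i, Bornology.IsBounded (K i)) (hKconv : ∀ i, Convex ℝ (K i))
    (hβ : ∀ i < N, ∀ x ∈ K i,
      IsGreatest {u : ℝ | (u, x) ∈ Ω i ∧ x + 2 * Δ * u ∈ K (i + 1)} (β i x))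
    (hmono : ∀ i < N, ∀ x ∈ K i, ∀ x' ∈ K i, x ≤ x' →
      x + 2 * Δ * β i x ≤ x' + 2 * Δ * β i x')
    (xstar : ℕ → ℝ) (hxstar0 : xstar 0 = a)
    (hxstarstep : ∀ i < N,
      xstar (i + 1) = min (xstar i + 2 * Δ * β i (xstar i)) (sSup (K (i + 1))))
    (x u : ℕ → ℝ) (hx0 : x 0 = a) (hxK : ∀ i ≤ N, x i ∈ K i)
    (hadm : ∀ i < N, (u i, x i) ∈ Ω i ∧ x (i + 1) = x i + 2 * Δ * u i) :
    (∀ i ≤ N, x i ≤ xstar i) ∧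
    ((∀ i ≤ N, 0 < x i) →
      ∑ i ∈ Finset.range (N + 1), Δ / Real.sqrt (xstar i) ≤
        ∑ i ∈ Finset.range (N + 1), Δ / Real.sqrt (x i)) :=
  greedy_optimality_general N Δ hΔ Ω K β a hKbdd hβ hmono xstar hxstar0 hxstarstep x u hx0 hxK hadm
end

section
/- Monotone threshold condition for optimality: let the constraints at all stages be u·ā(s_i)[k] + x·b̄(s_i)[k] + c̄(s_i)[k] ≤ 0 with continuous coefficient functions on a compact interval, and suppose ā(s)[k] ≠ 0 for all s and k (no zero-inertia points). Then there exists Δ_thr > 0 such that for all 0 < Δ < Δ_thr, every constraint k with ā(s)[k] > 0 satisfies b̄(s)[k]/ā(s)[k] < 1/(2Δ) for all s; consequently the maximal transition function T_i^β is non-decreasing on K_i at every stage. -/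
/-!
Monotonicity of `x ↦ x + 2Δ β(x)` comes from a shift argument: if `u` is admissible at `x` and
`x ≤ y`, then `u - (y - x)/(2Δ)` still satisfies at `y` every constraint with `ā[k] > 0`, precisely
because `b̄[k]/ā[k] < 1/(2Δ)`, while the constraints with `ā[k] ≤ 0` only bound `u` from below and
are met by anything above `β(y)`. Hence `β(x) - (y - x)/(2Δ) ≤ β(y)`. The threshold exists since
without zero-inertia points each `b̄[k]/ā[k]` is continuous on the compact interval, hence bounded.
-/

open Set

def controlSet {ι : Type*} (a b c : ι → ℝ) (x : ℝ) : Set ℝ :=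
  {u | ∀ k, u * a k + x * b k + c k ≤ 0}

theorem IsCompact.exists_forall_div_le_of_continuousOn {X ι : Type*} [TopologicalSpace X]
    [Finite ι] {S : Set X} (hS : IsCompact S) {a b : X → ι → ℝ}
    (ha : ∀ k, ContinuousOn (fun s => a s k) S) (hb : ∀ k, ContinuousOn (fun s => b s k) S)
    (hne : ∀ s ∈ S, ∀ k, a s k ≠ 0) :
    ∃ C, ∀ s ∈ S, ∀ k, b s k / a s k ≤ C := by
  have hbdd : ∀ k, ∃ C, ∀ s ∈ S, b s k / a s k ≤ C := fun k =>
    (hS.bddAbove_image ((hb k).div (ha k) fun s hs => hne s hs k)).imp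
      fun _ hC s hs => hC (mem_image_of_mem _ hs)
  choose C hC using hbdd
  obtain ⟨M, hM⟩ := (finite_range C).bddAbove
  exact ⟨M, fun s hs k => (hC k s hs).trans (hM (mem_range_self k))⟩

theorem add_sub_div_mul_add_nonpos {a b c u x y Δ : ℝ} (ha : 0 < a)
    (hba : b / a < 1 / (2 * Δ)) (hxy : x ≤ y) (hu : u * a + x * b + c ≤ 0) :
    (u - (y - x) / (2 * Δ)) * a + y * b + c ≤ 0 := by
  have hslope : b - a / (2 * Δ) < 0 := by
    rwa [sub_neg, ← mul_one_div, ← div_lt_iff₀' ha]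
  calc (u - (y - x) / (2 * Δ)) * a + y * b + c
      = (u * a + x * b + c) + (y - x) * (b - a / (2 * Δ)) := by ring
    _ ≤ 0 := add_nonpos hu (mul_nonpos_of_nonneg_of_nonpos (by linarith) hslope.le)

theorem sub_div_le_of_isGreatest_controlSet {ι : Type*} {a b c : ι → ℝ} {Δ : ℝ}
    (hba : ∀ k, 0 < a k → b k / a k < 1 / (2 * Δ)) {β : ℝ → ℝ}
    (hβ : ∀ x, IsGreatest (controlSet a b c x) (β x)) {x y : ℝ} (hxy : x ≤ y) :
    β x - (y - x) / (2 * Δ) ≤ β y := by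
  by_contra! hlt
  refine hlt.not_ge ((hβ y).2 fun k => ?_)
  rcases lt_or_ge 0 (a k) with hak | hak
  · exact add_sub_div_mul_add_nonpos hak (hba k hak) hxy ((hβ x).1 k)
  · calc (β x - (y - x) / (2 * Δ)) * a k + y * b k + c k
        ≤ β y * a k + y * b k + c k := by linarith [mul_le_mul_of_nonpos_right hlt.le hak]
      _ ≤ 0 := (hβ y).1 k

theorem monotone_add_two_mul_of_isGreatest_controlSet {ι : Type*} {a b c : ι → ℝ} {Δ : ℝ}
    (hΔ : 0 < Δ) (hba : ∀ k, 0 < a k → b k / a k < 1 / (2 * Δ)) {β : ℝ → ℝ}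
    (hβ : ∀ x, IsGreatest (controlSet a b c x) (β x)) :
    Monotone fun x => x + 2 * Δ * β x := by
  intro x y hxy
  have key := mul_le_mul_of_nonneg_left (sub_div_le_of_isGreatest_controlSet hba hβ hxy)
    (by positivity : (0 : ℝ) ≤ 2 * Δ)
  rw [mul_sub, mul_div_cancel₀ _ (by positivity)] at key
  dsimp only
  linarith

theorem lt_one_div_two_mul_of_lt_one_div_two_mul {C Δ : ℝ} (hC : 0 < C) (hΔ : 0 < Δ)
    (h : Δ < 1 / (2 * C)) : C < 1 / (2 * Δ) := by
  rw [lt_div_iff₀ (by positivity)] at h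
  rw [lt_div_iff₀ (by positivity)]
  linarith [show C * (2 * Δ) = Δ * (2 * C) by ring]

theorem monotone_threshold_general (m : ℕ) (send : ℝ)
    (abar bbar cbar : ℝ → Fin m → ℝ)
    (hacont : ∀ k, ContinuousOn (fun s => abar s k) (Set.Icc 0 send))
    (hbcont : ∀ k, ContinuousOn (fun s => bbar s k) (Set.Icc 0 send))
    (hnz : ∀ s ∈ Set.Icc (0 : ℝ) send, ∀ k, abar s k ≠ 0) :
    ∃ Δthr > (0 : ℝ), ∀ Δ : ℝ, 0 < Δ → Δ < Δthr →
      (∀ s ∈ Set.Icc (0 : ℝ) send, ∀ k, 0 < abar s k →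
        bbar s k / abar s k < 1 / (2 * Δ)) ∧
      (∀ s ∈ Set.Icc (0 : ℝ) send, ∀ β : ℝ → ℝ,
        (∀ x : ℝ, IsGreatest
          {u : ℝ | ∀ k, u * abar s k + x * bbar s k + cbar s k ≤ 0} (β x)) →
        Monotone (fun x : ℝ => x + 2 * Δ * β x)) := by
  obtain ⟨C, hC⟩ := isCompact_Icc.exists_forall_div_le_of_continuousOn hacont hbcont hnz
  have hCpos : 0 < |C| + 1 := by positivity
  refine ⟨1 / (2 * (|C| + 1)), by positivity, fun Δ hΔ hΔthr => ?_⟩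
  have hba : ∀ s ∈ Set.Icc (0 : ℝ) send, ∀ k, 0 < abar s k →
      bbar s k / abar s k < 1 / (2 * Δ) := fun s hs k _ =>
    calc bbar s k / abar s k ≤ C := hC s hs k
      _ < |C| + 1 := by linarith [le_abs_self C]
      _ < 1 / (2 * Δ) := lt_one_div_two_mul_of_lt_one_div_two_mul hCpos hΔ hΔthr
  exact ⟨hba, fun s hs β hβ => monotone_add_two_mul_of_isGreatest_controlSet hΔ (hba s hs) hβ⟩

/-- Monotone threshold condition: with continuous coefficients and no zero-inertia
points, for small enough step size every positive-coefficient constraint satisfies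
`b̄/ā < 1/(2Δ)`; consequently the maximal transition function is non-decreasing. -/
theorem monotone_threshold (m : ℕ) (send : ℝ) (hsend : 0 < send)
    (abar bbar cbar : ℝ → Fin m → ℝ)
    (hacont : ∀ k, ContinuousOn (fun s => abar s k) (Set.Icc 0 send))
    (hbcont : ∀ k, ContinuousOn (fun s => bbar s k) (Set.Icc 0 send))
    (hnz : ∀ s ∈ Set.Icc (0 : ℝ) send, ∀ k, abar s k ≠ 0) :
    ∃ Δthr > (0 : ℝ), ∀ Δ : ℝ, 0 < Δ → Δ < Δthr →
      (∀ s ∈ Set.Icc (0 : ℝ) send, ∀ k, 0 < abar s k →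
        bbar s k / abar s k < 1 / (2 * Δ)) ∧
      (∀ s ∈ Set.Icc (0 : ℝ) send, ∀ β : ℝ → ℝ,
        (∀ x : ℝ, IsGreatest
          {u : ℝ | ∀ k, u * abar s k + x * bbar s k + cbar s k ≤ 0} (β x)) →
        Monotone (fun x : ℝ => x + 2 * Δ * β x)) :=
  monotone_threshold_general m send abar bbar cbar hacont hbcont hnz
end
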